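/- Let c₁ > 0, c₂ > 0, and let τ : [a,b] → ℝ be a C¹ function such that |τ'(η)|/√(c₁²τ(η)² + c₂²) ≤ M for all η ∈ [a,b], for some constant M > 0. Then |arcsinh(c₁τ(b)/c₂) - arcsinh(c₁τ(a)/c₂)| ≤ c₁ M (b - a), and consequently |τ(b)| ≤ (c₂/c₁)·sinh(arcsinh(c₁|τ(a)|/c₂) + c₁ M (b-a)). -/

import Mathlib

/-!
Along the curve, `η ↦ arsinh (c₁ τ η / c₂)` has derivative `c₁ τ' / √(c₁² τ² + c₂²)`, so the
hypothesis makes it `c₁ M`-Lipschitz on `[a, b]` by the mean value inequality. Since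
`|arsinh u| = arsinh |u|` and `sinh` is increasing, undoing the substitution bounds `|τ b|`.
-/

open Real

lemma Real.abs_arsinh (x : ℝ) : |arsinh x| = arsinh |x| :=
  sinh_injective <| by rw [← abs_sinh, sinh_arsinh, sinh_arsinh]

lemma hasDerivAt_arsinh_mul_div {f : ℝ → ℝ} {f' x c₁ c₂ : ℝ} (hc₂ : 0 < c₂)
    (hf : HasDerivAt f f' x) :
    HasDerivAt (fun y => arsinh (c₁ * f y / c₂)) (c₁ * f' / √(c₁ ^ 2 * f x ^ 2 + c₂ ^ 2)) x := by
  have hscale : √(c₁ ^ 2 * f x ^ 2 + c₂ ^ 2) = c₂ * √(1 + (c₁ * f x / c₂) ^ 2) := by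
    rw [← sqrt_sq hc₂.le, ← sqrt_mul (sq_nonneg c₂), sqrt_sq hc₂.le]
    congr 1
    field_simp
    ring
  have hinner : HasDerivAt (fun y => c₁ * f y / c₂) (c₁ * f' / c₂) x :=
    (hf.const_mul c₁).div_const c₂
  convert hinner.arsinh using 1
  have hroot : 0 < √(1 + (c₁ * f x / c₂) ^ 2) := sqrt_pos.2 (by positivity)
  rw [hscale, smul_eq_mul]
  field_simp

lemma abs_le_sinh_arsinh_abs_add {u v D : ℝ} (h : |arsinh u - arsinh v| ≤ D) :
    |u| ≤ sinh (arsinh |v| + D) := by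
  have hu : |u| = sinh |arsinh u| := by rw [← abs_sinh, sinh_arsinh]
  rw [hu, ← abs_arsinh]
  refine sinh_le_sinh.2 ?_
  linarith [abs_sub_abs_le_abs_sub (arsinh u) (arsinh v)]

lemma abs_le_div_mul_sinh_of_abs_arsinh_sub_le {c₁ c₂ x y D : ℝ} (hc₁ : 0 < c₁) (hc₂ : 0 < c₂)
    (h : |arsinh (c₁ * y / c₂) - arsinh (c₁ * x / c₂)| ≤ D) :
    |y| ≤ c₂ / c₁ * sinh (arsinh (c₁ * |x| / c₂) + D) := by
  have hbound := abs_le_sinh_arsinh_abs_add h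
  simp only [abs_div, abs_mul, abs_of_pos hc₁, abs_of_pos hc₂] at hbound
  rw [div_mul_eq_mul_div, le_div_iff₀ hc₁]
  rwa [div_le_iff₀ hc₂, mul_comm c₁, mul_comm _ c₂] at hbound

theorem stmt_8_general (c₁ c₂ M a b : ℝ) (hc₁ : 0 < c₁) (hc₂ : 0 < c₂)
    (hab : a ≤ b) (τ τ' : ℝ → ℝ)
    (hderiv : ∀ η ∈ Set.Icc a b, HasDerivAt τ (τ' η) η)
    (hbound : ∀ η ∈ Set.Icc a b, |τ' η| / Real.sqrt (c₁ ^ 2 * (τ η) ^ 2 + c₂ ^ 2) ≤ M) :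
    |Real.arsinh (c₁ * τ b / c₂) - Real.arsinh (c₁ * τ a / c₂)| ≤ c₁ * M * (b - a) ∧
      |τ b| ≤ (c₂ / c₁) * Real.sinh (Real.arsinh (c₁ * |τ a| / c₂) + c₁ * M * (b - a)) := by
  have hderiv_norm_le : ∀ η ∈ Set.Icc a b,
      ‖c₁ * τ' η / √(c₁ ^ 2 * τ η ^ 2 + c₂ ^ 2)‖ ≤ c₁ * M := fun η hη => by
    rw [Real.norm_eq_abs, mul_div_assoc, abs_mul, abs_div, abs_of_pos hc₁,
      abs_of_nonneg (sqrt_nonneg _)]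
    exact mul_le_mul_of_nonneg_left (hbound η hη) hc₁.le
  have hlip := (convex_Icc a b).norm_image_sub_le_of_norm_hasDerivWithin_le
    (fun η hη => (hasDerivAt_arsinh_mul_div hc₂ (hderiv η hη)).hasDerivWithinAt) hderiv_norm_le
    (Set.left_mem_Icc.2 hab) (Set.right_mem_Icc.2 hab)
  rw [Real.norm_eq_abs, Real.norm_eq_abs, abs_of_nonneg (sub_nonneg.2 hab)] at hlip
  exact ⟨hlip, abs_le_div_mul_sinh_of_abs_arsinh_sub_le hc₁ hc₂ hlip⟩

theorem stmt_8 (c₁ c₂ M a b : ℝ) (hc₁ : 0 < c₁) (hc₂ : 0 < c₂) (hM : 0 < M)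
    (hab : a ≤ b) (τ τ' : ℝ → ℝ)
    (hderiv : ∀ η ∈ Set.Icc a b, HasDerivAt τ (τ' η) η)
    (hcont : ContinuousOn τ' (Set.Icc a b))
    (hbound : ∀ η ∈ Set.Icc a b, |τ' η| / Real.sqrt (c₁ ^ 2 * (τ η) ^ 2 + c₂ ^ 2) ≤ M) :
    |Real.arsinh (c₁ * τ b / c₂) - Real.arsinh (c₁ * τ a / c₂)| ≤ c₁ * M * (b - a) ∧
      |τ b| ≤ (c₂ / c₁) * Real.sinh (Real.arsinh (c₁ * |τ a| / c₂) + c₁ * M * (b - a)) :=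
  stmt_8_general c₁ c₂ M a b hc₁ hc₂ hab τ τ' hderiv hbound
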